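/- A finite simple graph G is a convex geometry with respect to the triangle path convexity if and only if G is a forest. -/

import Mathlib

open SimpleGraph

variable {V : Type*} {W : Type*}

/-- The convex hull of `S`: the smallest convex set containing `S`. -/
def chull (Cvx : Set V → Prop) (S : Set V) : Set V := ⋂₀ {T | S ⊆ T ∧ Cvx T}

/-- The set of extreme vertices of `S`. -/
def extremeSet (Cvx : Set V → Prop) (S : Set V) : Set V := {x | x ∈ S ∧ Cvx (S \ {x})}

/-- A convexity is a convex geometry if every convex set is the convex hull
of its extreme vertices. -/
def IsConvexGeometry (Cvx : Set V → Prop) : Prop :=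
  ∀ S : Set V, Cvx S → S = chull Cvx (extremeSet Cvx S)

/-- Convexity induced by a system of p-walks: `S` is convex iff every vertex
lying on a p-walk between two vertices of `S` belongs to `S`. -/
def PConvex (G : SimpleGraph V) (P : ∀ ⦃u v : V⦄, G.Walk u v → Prop) (S : Set V) : Prop :=
  ∀ ⦃u v : V⦄, u ∈ S → v ∈ S → ∀ w : G.Walk u v, P w → ∀ x ∈ w.support, x ∈ S

/-- `x` and `y` appear consecutively (in either order) in the list `l`. -/
def consecIn (l : List V) (x y : V) : Prop := [x, y] <:+: l ∨ [y, x] <:+: l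

/-- An induced path: a path such that the only edges of `G` between its vertices
are the consecutive ones. -/
def IsInducedPathW (G : SimpleGraph V) {u v : V} (w : G.Walk u v) : Prop :=
  w.IsPath ∧ ∀ x ∈ w.support, ∀ y ∈ w.support, G.Adj x y → consecIn w.support x y

/-- An induced cycle: a cycle such that the only edges of `G` between its vertices
are the consecutive (cyclically) ones. -/
def IsInducedCycleW (G : SimpleGraph V) {u : V} (w : G.Walk u u) : Prop :=
  w.IsCycle ∧ ∀ x ∈ w.support, ∀ y ∈ w.support, G.Adj x y → consecIn w.support x y

/-- A graph is chordal if it has no induced cycle of length at least 4. -/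
def Chordal (G : SimpleGraph V) : Prop :=
  ¬ ∃ (u : V) (w : G.Walk u u), IsInducedCycleW G w ∧ 4 ≤ w.length

/-- The cycle `w` has an odd chord: an edge of `G` joining two vertices of the cycle
whose distance along the cycle is odd and greater than 1. -/
def HasOddChord (G : SimpleGraph V) {u : V} (w : G.Walk u u) : Prop :=
  ∃ i j : ℕ, ∃ hi : i < w.support.length, ∃ hj : j < w.support.length, i < j ∧
    G.Adj (w.support.get ⟨i, hi⟩) (w.support.get ⟨j, hj⟩) ∧
    Odd (min (j - i) (w.length - (j - i))) ∧ 1 < min (j - i) (w.length - (j - i))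

/-- A graph is strongly chordal if it is chordal and every even cycle of length
at least 6 has an odd chord. -/
def StronglyChordal (G : SimpleGraph V) : Prop :=
  Chordal G ∧ ∀ (u : V) (w : G.Walk u u), w.IsCycle → Even w.length → 6 ≤ w.length →
    HasOddChord G w

/-- Closed neighborhood `N[v]`. -/
def closedNbhd (G : SimpleGraph V) (v : V) : Set V := insert v (G.neighborSet v)

/-- A vertex is simple if the closed neighborhoods of its closed neighbors form a
family totally ordered by inclusion. -/
def SimpleVtx (G : SimpleGraph V) (v : V) : Prop :=
  ∀ u ∈ closedNbhd G v, ∀ w ∈ closedNbhd G v,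
    closedNbhd G u ⊆ closedNbhd G w ∨ closedNbhd G w ⊆ closedNbhd G u

/-- A vertex is simplicial if its closed neighborhood is a clique. -/
def SimplicialVtx (G : SimpleGraph V) (v : V) : Prop :=
  G.IsClique (closedNbhd G v)

/-- An even-chorded path: a path with no odd chord and such that no endpoint
lies in a chord. -/
def IsEvenChorded (G : SimpleGraph V) {u v : V} (w : G.Walk u v) : Prop :=
  w.IsPath ∧ ∀ i j : ℕ, ∀ hi : i < w.support.length, ∀ hj : j < w.support.length,
    i + 1 < j → G.Adj (w.support.get ⟨i, hi⟩) (w.support.get ⟨j, hj⟩) →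
      Even (j - i) ∧ 0 < i ∧ j < w.support.length - 1

/-- A tolled walk `u₀u₁…u_k`: `u₀uᵢ ∈ E(G)` implies `i = 1` and `u_ju_k ∈ E(G)`
implies `j = k - 1`. -/
def IsTolledWalk (G : SimpleGraph V) {u v : V} (w : G.Walk u v) : Prop :=
  ∀ i : ℕ, ∀ hi : i < w.support.length,
    (G.Adj u (w.support.get ⟨i, hi⟩) → i = 1) ∧
    (G.Adj (w.support.get ⟨i, hi⟩) v → i = w.support.length - 2)

/-- A weakly toll walk `u₀u₁…u_k`: `u₀uᵢ ∈ E(G)` implies `uᵢ = u₁` and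
`u_ju_k ∈ E(G)` implies `u_j = u_{k-1}`. -/
def IsWeaklyTollWalk (G : SimpleGraph V) {u v : V} (w : G.Walk u v) : Prop :=
  ∀ i : ℕ, ∀ hi : i < w.support.length,
    (G.Adj u (w.support.get ⟨i, hi⟩) → w.support.get ⟨i, hi⟩ = w.support.getD 1 u) ∧
    (G.Adj (w.support.get ⟨i, hi⟩) v → w.support.get ⟨i, hi⟩ = w.support.getD (w.support.length - 2) v)

/-- An interval graph: vertices can be assigned nonempty closed real intervals so that
distinct vertices are adjacent iff the intervals intersect. -/
def IsIntervalGraph (G : SimpleGraph V) : Prop :=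
  ∃ a b : V → ℝ, (∀ v, a v ≤ b v) ∧
    ∀ u v : V, u ≠ v →
      (G.Adj u v ↔ (Set.Icc (a u) (b u) ∩ Set.Icc (a v) (b v)).Nonempty)

/-- A proper interval graph: an interval model in which no interval properly
contains another. -/
def IsProperIntervalGraph (G : SimpleGraph V) : Prop :=
  ∃ a b : V → ℝ, (∀ v, a v ≤ b v) ∧
    (∀ u v : V, u ≠ v →
      (G.Adj u v ↔ (Set.Icc (a u) (b u) ∩ Set.Icc (a v) (b v)).Nonempty)) ∧
    ∀ u v : V, ¬ (Set.Icc (a u) (b u) ⊂ Set.Icc (a v) (b v))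

/-- An end vertex: some interval model in which its interval is an end interval. -/
def IsEndVertex (G : SimpleGraph V) (x : V) : Prop :=
  ∃ a b : V → ℝ, (∀ v, a v ≤ b v) ∧
    (∀ u v : V, u ≠ v →
      (G.Adj u v ↔ (Set.Icc (a u) (b u) ∩ Set.Icc (a v) (b v)).Nonempty)) ∧
    ((∀ v, a x ≤ a v) ∨ (∀ v, b v ≤ b x))

/-- `G` contains an induced subgraph isomorphic to `H`. -/
def HasInducedSubgraphIso (G : SimpleGraph V) (H : SimpleGraph W) : Prop :=
  ∃ f : W ↪ V, ∀ a b : W, G.Adj (f a) (f b) ↔ H.Adj a b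

def gemGraph : SimpleGraph (Fin 5) :=
  SimpleGraph.fromRel fun a b =>
    ((a : ℕ), (b : ℕ)) ∈ [(0,1),(1,2),(2,3),(4,0),(4,1),(4,2),(4,3)]

def houseGraph : SimpleGraph (Fin 5) :=
  SimpleGraph.fromRel fun a b =>
    ((a : ℕ), (b : ℕ)) ∈ [(0,1),(1,2),(2,3),(0,3),(0,4),(1,4)]

def dominoGraph : SimpleGraph (Fin 6) :=
  SimpleGraph.fromRel fun a b =>
    ((a : ℕ), (b : ℕ)) ∈ [(0,1),(1,2),(2,3),(0,3),(2,4),(4,5),(3,5)]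

def aGraph : SimpleGraph (Fin 6) :=
  SimpleGraph.fromRel fun a b =>
    ((a : ℕ), (b : ℕ)) ∈ [(0,1),(1,2),(2,3),(0,3),(2,4),(3,5)]

/-- A triangle path: a path such that any two of its vertices at distance
greater than 2 along the path are non-adjacent in `G`. -/
def IsTrianglePath (G : SimpleGraph V) {u v : V} (w : G.Walk u v) : Prop :=
  w.IsPath ∧ ∀ i j : ℕ, ∀ hi : i < w.support.length, ∀ hj : j < w.support.length,
    i + 2 < j → ¬ G.Adj (w.support.get ⟨i, hi⟩) (w.support.get ⟨j, hj⟩)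

/-- `S` is `H`-free convex. -/
def HFreeConvex [Fintype W] (G : SimpleGraph V) (H : SimpleGraph W) (S : Set V) : Prop :=
  ∀ (S' : Finset V), ↑S' ⊆ S → S'.card = Fintype.card W - 1 →
    ∀ x : V, Nonempty ((G.induce (↑S' ∪ {x} : Set V)) ≃g H) → x ∈ S

/-- `a b c d` is an induced path on four vertices of `G`. -/
def InducedP4 (G : SimpleGraph V) (a b c d : V) : Prop :=
  G.Adj a b ∧ G.Adj b c ∧ G.Adj c d ∧ ¬ G.Adj a c ∧ ¬ G.Adj a d ∧ ¬ G.Adj b d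

/-- Every connected component of `G` is a star. -/
def StarForest (G : SimpleGraph V) : Prop :=
  ∀ v : V, ∃ c : V, G.Reachable v c ∧ (∀ x, G.Reachable c x → x ≠ c → G.Adj c x) ∧
    ∀ x y, G.Adj c x → G.Adj c y → ¬ G.Adj x y

/-- An induced `n`-gem in `G`: `x 0, …, x n` is an induced path and `u` is adjacent
to all of them, the whole forming an induced subgraph of `G`. -/
def IsInducedNGem (G : SimpleGraph V) (n : ℕ) (x : Fin (n + 1) → V) (u : V) : Prop :=
  Function.Injective x ∧ (∀ i, x i ≠ u) ∧
  (∀ i j, G.Adj (x i) (x j) ↔ ((i : ℕ) + 1 = (j : ℕ) ∨ (j : ℕ) + 1 = (i : ℕ))) ∧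
  (∀ i, G.Adj u (x i))

/-- The induced `n`-gem is solved: there is an induced path of length 3 in `G`
connecting `x 0` and `x n` that avoids `u`. -/
def GemSolved (G : SimpleGraph V) (n : ℕ) (x : Fin (n + 1) → V) (u : V) : Prop :=
  ∃ w : G.Walk (x 0) (x (Fin.last n)), IsInducedPathW G w ∧ w.length = 3 ∧ u ∉ w.support


section Aux

open SimpleGraph Walk

variable {V : Type*} {G : SimpleGraph V}

/-- Bridge between `support.get` and `getVert`. -/
lemma support_get_eq_getVert {u v : V} (w : G.Walk u v) (i : ℕ)
    (hi : i < w.support.length) : w.support.get ⟨i, hi⟩ = w.getVert i := by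
  induction w generalizing i with
  | nil =>
    simp only [Walk.support_nil, List.length_singleton] at hi
    interval_cases i
    rfl
  | cons h p ih =>
    cases i with
    | zero => simp [Walk.support_cons]
    | succ i =>
      simp only [Walk.support_cons, List.length_cons] at hi
      simpa [Walk.support_cons, Walk.getVert_cons_succ] using ih i (by omega)

lemma path_getVert_inj {u v : V} {w : G.Walk u v} (hw : w.IsPath) {i j : ℕ}
    (hi : i ≤ w.length) (hj : j ≤ w.length) (h : w.getVert i = w.getVert j) : i = j := by
  have hi' : i < w.support.length := by rw [Walk.length_support]; omega
  have hj' : j < w.support.length := by rw [Walk.length_support]; omega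
  rw [← support_get_eq_getVert _ _ hi', ← support_get_eq_getVert _ _ hj'] at h
  have hnd : w.support.Nodup := (Walk.isPath_def w).1 hw
  have := List.nodup_iff_injective_get.1 hnd h
  exact congrArg Fin.val this

/-- An interior vertex of a path has two distinct neighbors on the path. -/
lemma interior_nbrs {u v : V} {w : G.Walk u v} (hw : w.IsPath) {x : V}
    (hx : x ∈ w.support) (hxu : x ≠ u) (hxv : x ≠ v) :
    ∃ s t, s ∈ w.support ∧ t ∈ w.support ∧ s ≠ t ∧ G.Adj s x ∧ G.Adj x t := by
  obtain ⟨k, hk, hkle⟩ := Walk.mem_support_iff_exists_getVert.1 hx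
  have hk0 : k ≠ 0 := by rintro rfl; rw [Walk.getVert_zero] at hk; exact hxu hk.symm
  have hkl : k < w.length := by
    rcases lt_or_eq_of_le hkle with h' | h'
    · exact h'
    · exfalso; rw [h', Walk.getVert_length] at hk; exact hxv hk.symm
  refine ⟨w.getVert (k-1), w.getVert (k+1), ?_, ?_, ?_, ?_, ?_⟩
  · exact Walk.mem_support_iff_exists_getVert.2 ⟨k-1, rfl, by omega⟩
  · exact Walk.mem_support_iff_exists_getVert.2 ⟨k+1, rfl, by omega⟩
  · intro he
    have := path_getVert_inj hw (by omega) (by omega) he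
    omega
  · have h1 := w.adj_getVert_succ (show k - 1 < w.length by omega)
    rw [show k - 1 + 1 = k from by omega, hk] at h1
    exact h1
  · have h2 := w.adj_getVert_succ hkl
    rw [hk] at h2
    exact h2

/-- Take the first `j` steps of a walk. -/
lemma walk_take {u v : V} (w : G.Walk u v) :
    ∀ j, j ≤ w.length → ∃ (x : V) (q : G.Walk u x), x = w.getVert j ∧ q.length = j ∧
      q.support.Sublist w.support ∧ ∀ k, k ≤ j → q.getVert k = w.getVert k := by
  induction w with
  | nil =>
    intro j hj
    have : j = 0 := by simpa using hj
    subst this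
    exact ⟨_, Walk.nil, rfl, rfl, by simp, fun k hk => rfl⟩
  | @cons u m v h p ih =>
    intro j hj
    cases j with
    | zero =>
      refine ⟨u, Walk.nil, (Walk.getVert_zero _).symm, rfl, ?_, ?_⟩
      · simp [Walk.support_cons, Walk.support_nil]
      · intro k hk
        have : k = 0 := by omega
        subst this; simp
    | succ j =>
      obtain ⟨x, q, hx, hql, hqs, hqk⟩ := ih j (by simpa [Walk.length_cons] using hj)
      refine ⟨x, Walk.cons h q, by simpa [Walk.getVert_cons_succ] using hx,
        by simp [hql], ?_, ?_⟩
      · simp only [Walk.support_cons]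
        exact List.cons_sublist_cons.2 hqs
      · intro k hk
        cases k with
        | zero => simp
        | succ k => simpa [Walk.getVert_cons_succ] using hqk k (by omega)

/-- Drop the first `i` steps of a walk. -/
lemma walk_drop {u v : V} (w : G.Walk u v) :
    ∀ i, i ≤ w.length → ∃ (x : V) (q : G.Walk x v), x = w.getVert i ∧
      q.length = w.length - i ∧ q.support.Sublist w.support ∧
      ∀ k, q.getVert k = w.getVert (i + k) := by
  induction w with
  | nil =>
    intro i hi
    have : i = 0 := by simpa using hi
    subst this
    exact ⟨_, Walk.nil, rfl, rfl, by simp, fun k => rfl⟩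
  | @cons u m v h p ih =>
    intro i hi
    cases i with
    | zero =>
      refine ⟨u, Walk.cons h p, (Walk.getVert_zero _).symm, by simp, List.Sublist.refl _, ?_⟩
      intro k; simp
    | succ i =>
      obtain ⟨x, q, hx, hql, hqs, hqk⟩ := ih i (by simpa [Walk.length_cons] using hi)
      refine ⟨x, q, by simpa [Walk.getVert_cons_succ] using hx, by simp [hql, Walk.length_cons], ?_, ?_⟩
      · exact hqs.trans (by simp [Walk.support_cons])
      · intro k
        rw [show i + 1 + k = (i + k) + 1 from by omega, Walk.getVert_cons_succ]
        exact hqk k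

/-- Subpath of a path between positions `i ≤ j`. -/
lemma walk_subpath {u v : V} (w : G.Walk u v) (hw : w.IsPath) (i j : ℕ)
    (hij : i ≤ j) (hj : j ≤ w.length) :
    ∃ q : G.Walk (w.getVert i) (w.getVert j), q.IsPath ∧ q.length = j - i := by
  obtain ⟨x1, q1, hx1, hl1, hs1, hk1⟩ := walk_take w j hj
  obtain ⟨x2, q2, hx2, hl2, hs2, hk2⟩ := walk_drop q1 i (by omega)
  have hx2' : x2 = w.getVert i := by rw [hx2, hk1 i hij]
  refine ⟨q2.copy hx2' (hx1 ▸ rfl), ?_, ?_⟩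
  · rw [Walk.isPath_def, Walk.support_copy]
    exact List.Nodup.sublist (hs2.trans hs1) ((Walk.isPath_def w).1 hw)
  · rw [Walk.length_copy, hl2, hl1]

/-- In a forest, every path is a triangle path. -/
lemma trianglePath_of_path (hforest : G.IsAcyclic) {a b : V} {p : G.Walk a b}
    (hp : p.IsPath) : IsTrianglePath G p := by
  refine ⟨hp, ?_⟩
  intro i j hi hj hij hadj
  rw [support_get_eq_getVert _ _ hi, support_get_eq_getVert _ _ hj] at hadj
  have hjle : j ≤ p.length := by rw [Walk.length_support] at hj; omega
  obtain ⟨q, hq, hql⟩ := walk_subpath p hp i j (by omega) hjle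
  have he : (Walk.cons hadj Walk.nil : G.Walk _ _).IsPath := by
    rw [Walk.isPath_def]
    simp [hadj.ne]
  have heq := isAcyclic_iff_path_unique.1 hforest ⟨q, hq⟩ ⟨Walk.cons hadj Walk.nil, he⟩
  have hlen : q.length = 1 := by
    have := congrArg (fun (r : G.Path _ _) => r.1.length) heq
    simpa using this
  omega

/-- In a forest, a path-member adjacent to the start must be the second vertex. -/
lemma adj_start_eq_getVert_one (hforest : G.IsAcyclic) {a b : V} {p : G.Walk a b}
    (hp : p.IsPath) {t : V} (ht : t ∈ p.support) (hadj : G.Adj a t) : t = p.getVert 1 := by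
  classical
  have hq := hp.takeUntil ht
  have he : (Walk.cons hadj Walk.nil : G.Walk a t).IsPath := by
    rw [Walk.isPath_def]; simp [hadj.ne]
  have heq : p.takeUntil t ht = Walk.cons hadj Walk.nil :=
    Subtype.ext_iff.1 (isAcyclic_iff_path_unique.1 hforest ⟨_, hq⟩ ⟨_, he⟩)
  have hspec := p.take_spec ht
  rw [heq] at hspec
  have : p.getVert 1 = t := by
    rw [← hspec]
    simp [Walk.cons_append, Walk.nil_append, Walk.getVert_cons_succ]
  exact this.symm

/-- Every vertex of a cycle has two distinct neighbors on the cycle. -/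
lemma cycle_two_nbrs {v0 : V} {c : G.Walk v0 v0} (hc : c.IsCycle) {x : V}
    (hx : x ∈ c.support) :
    ∃ y z, y ∈ c.support ∧ z ∈ c.support ∧ y ≠ z ∧ G.Adj y x ∧ G.Adj x z := by
  classical
  set d := c.rotate x hx with hd
  have hdc : d.IsCycle := hc.rotate hx
  have hlen : 3 ≤ d.length := hdc.three_le_length
  have hmem : ∀ y, y ∈ d.support → y ∈ c.support := by
    intro y hy
    rw [Walk.support_eq_cons] at hy
    rcases List.mem_cons.1 hy with hy | hy
    · exact hy ▸ hx
    · exact List.mem_of_mem_tail (((c.support_rotate x hx).mem_iff).1 hy)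
  refine ⟨d.getVert (d.length - 1), d.getVert 1, ?_, ?_, ?_, ?_, ?_⟩
  · exact hmem _ (Walk.mem_support_iff_exists_getVert.2 ⟨d.length - 1, rfl, by omega⟩)
  · exact hmem _ (Walk.mem_support_iff_exists_getVert.2 ⟨1, rfl, by omega⟩)
  · intro he
    have htl : d.support.tail.length = d.length := by
      rw [List.length_tail, Walk.length_support]; omega
    have hnd : d.support.tail.Nodup := hdc.support_nodup
    have e1 : d.support.tail.get ⟨0, by omega⟩ = d.getVert 1 := by
      rw [List.get_tail]
      exact support_get_eq_getVert d 1 (by rw [Walk.length_support]; omega)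
    have e2 : d.support.tail.get ⟨d.length - 2, by omega⟩ = d.getVert (d.length - 1) := by
      rw [List.get_tail]
      rw [support_get_eq_getVert d (d.length - 2 + 1) (by rw [Walk.length_support]; omega)]
      rw [show d.length - 2 + 1 = d.length - 1 from by omega]
    have hinj := List.nodup_iff_injective_get.1 hnd (e2.trans (he.trans e1.symm))
    have := congrArg Fin.val hinj
    simp only at this
    omega
  · have h1 := d.adj_getVert_succ (show d.length - 1 < d.length by omega)
    rw [show d.length - 1 + 1 = d.length from by omega, Walk.getVert_length] at h1
    exact h1
  · have h2 := d.adj_getVert_succ (show 0 < d.length by omega)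
    rw [Walk.getVert_zero] at h2
    exact h2

variable {P : ∀ ⦃u v : V⦄, G.Walk u v → Prop}

lemma pconvex_empty : PConvex G P (∅ : Set V) := by
  intro u v hu
  exact absurd hu (Set.notMem_empty u)

lemma subset_chull (Cvx : Set V → Prop) (S : Set V) : S ⊆ chull Cvx S :=
  Set.subset_sInter fun _ hT => hT.1

lemma chull_min {Cvx : Set V → Prop} {S T : Set V} (h1 : S ⊆ T) (h2 : Cvx T) :
    chull Cvx S ⊆ T :=
  Set.sInter_subset_of_mem ⟨h1, h2⟩

lemma pconvex_chull (S : Set V) : PConvex G P (chull (PConvex G P) S) := by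
  intro u v hu hv w hw x hx
  rw [chull, Set.mem_sInter]
  intro T hT
  exact hT.2 (Set.mem_sInter.1 hu T hT) (Set.mem_sInter.1 hv T hT) w hw x hx

end Aux

/-- A finite simple graph `G` is a convex geometry with respect to the
triangle path convexity if and only if `G` is a forest. -/
theorem triangle_path_convex_geometry_iff_forest
    {V : Type*} [Fintype V] (G : SimpleGraph V) :
    IsConvexGeometry (PConvex G (fun _ _ w => IsTrianglePath G w)) ↔ G.IsAcyclic := by
  classical
  set Cvx := PConvex G (fun _ _ w => IsTrianglePath G w) with hCvx
  constructor
  · -- convex geometry → acyclic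
    intro hgeom
    by_contra hcyc
    unfold SimpleGraph.IsAcyclic at hcyc
    push_neg at hcyc
    obtain ⟨v0, c, hc⟩ := hcyc
    set S0 : Set V := {y | y ∈ c.support} with hS0
    set S : Set V := chull Cvx S0 with hSdef
    have hSconv : Cvx S := pconvex_chull S0
    have hS0S : S0 ⊆ S := subset_chull Cvx S0
    have hST : S ⊆ {x | x ∈ S ∧ ∃ y z, y ∈ S ∧ z ∈ S ∧ y ≠ z ∧ G.Adj y x ∧ G.Adj x z} := by
      apply chull_min
      · intro x hx
        obtain ⟨y, z, hy, hz, hyz, hyx, hxz⟩ := cycle_two_nbrs hc hx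
        exact ⟨hS0S hx, y, z, hS0S hy, hS0S hz, hyz, hyx, hxz⟩
      · intro u v hu hv w hw x hxsupp
        have hxS : x ∈ S := hSconv hu.1 hv.1 w hw x hxsupp
        by_cases hxu : x = u
        · exact hxu ▸ hu
        by_cases hxv : x = v
        · exact hxv ▸ hv
        obtain ⟨s, t, hsw, htw, hst, hsx, hxt⟩ := interior_nbrs hw.1 hxsupp hxu hxv
        exact ⟨hxS, s, t, hSconv hu.1 hv.1 w hw s hsw,
          hSconv hu.1 hv.1 w hw t htw, hst, hsx, hxt⟩
    have hext : extremeSet Cvx S = ∅ := by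
      rw [Set.eq_empty_iff_forall_notMem]
      rintro x ⟨hxS, hconv⟩
      obtain ⟨-, y, z, hyS, hzS, hyz, hyx, hxz⟩ := hST hxS
      have hw : IsTrianglePath G (Walk.cons hyx (Walk.cons hxz Walk.nil)) := by
        constructor
        · rw [Walk.isPath_def]
          simp [hyx.ne, hxz.ne, hyz]
        · intro i j hi hj hij hadj
          simp only [Walk.support_cons, Walk.support_nil, List.length_cons,
            List.length_nil] at hj
          omega
      have hmem := hconv (u := y) (v := z) ⟨hyS, by simp [hyx.ne]⟩
        ⟨hzS, by simp [hxz.ne']⟩ _ hw x (by simp [Walk.support_cons])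
      exact hmem.2 rfl
    have heq := hgeom S hSconv
    rw [hext] at heq
    have hv0 : v0 ∈ S := hS0S (c.start_mem_support)
    rw [heq] at hv0
    have hsub : chull Cvx (∅ : Set V) ⊆ ∅ := chull_min (Set.Subset.refl _) pconvex_empty
    exact Set.notMem_empty v0 (hsub hv0)
  · -- acyclic → convex geometry
    intro hforest S hS
    have hextsub : extremeSet Cvx S ⊆ S := fun y hy => hy.1
    apply Set.Subset.antisymm
    · intro x hx
      -- maximal path through x with support in S
      set Q : ℕ → Prop := fun n => ∃ (a b : V) (p : G.Walk a b), p.IsPath ∧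
        (∀ y ∈ p.support, y ∈ S) ∧ x ∈ p.support ∧ p.length = n with hQdef
      have hQ0 : Q 0 := ⟨x, x, Walk.nil, by simp, by
          intro y hy
          rw [Walk.support_nil, List.mem_singleton] at hy
          exact hy ▸ hx, by simp, rfl⟩
      set n := Nat.findGreatest Q (Fintype.card V) with hn
      have hQn : Q n := Nat.findGreatest_spec (Nat.zero_le _) hQ0
      obtain ⟨a, b, p, hp, hpS, hxp, hlen⟩ := hQn
      have hmax : ∀ (a' b' : V) (q : G.Walk a' b'), q.IsPath →
          (∀ y ∈ q.support, y ∈ S) → x ∈ q.support → q.length ≤ n := by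
        intro a' b' q h1 h2 h3
        exact Nat.le_findGreatest (le_of_lt h1.length_lt) ⟨a', b', q, h1, h2, h3, rfl⟩
      have hend : ∀ (cc dd : V) (q : G.Walk cc dd), q.IsPath →
          (∀ y ∈ q.support, y ∈ S) → x ∈ q.support → q.length = n →
          cc ∈ extremeSet Cvx S := by
        intro cc dd q hq hqS hxq hqlen
        refine ⟨hqS _ q.start_mem_support, ?_⟩
        intro u v hu hv w hw y hy
        have hyS : y ∈ S := hS hu.1 hv.1 w hw y hy
        refine ⟨hyS, ?_⟩
        simp only [Set.mem_singleton_iff]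
        intro hycc
        subst hycc
        obtain ⟨s, t, hsw, htw, hst, hsc, hct⟩ := interior_nbrs hw.1 hy
          (fun h => hu.2 (by simp [← h])) (fun h => hv.2 (by simp [← h]))
        have hnbr : ∀ t', G.Adj y t' → t' ∈ S → t' ∈ q.support := by
          intro t' ha ht'S
          by_contra hns
          have hq' : (Walk.cons ha.symm q).IsPath := hq.cons hns
          have hle : (Walk.cons ha.symm q).length ≤ n := by
            apply hmax t' dd _ hq' _ (by rw [Walk.support_cons]; exact List.mem_cons_of_mem _ hxq)
            intro z hz
            rw [Walk.support_cons] at hz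
            rcases List.mem_cons.1 hz with hz | hz
            · exact hz ▸ ht'S
            · exact hqS z hz
          rw [Walk.length_cons, hqlen] at hle
          omega
        have hsS : s ∈ S := hS hu.1 hv.1 w hw s hsw
        have htS : t ∈ S := hS hu.1 hv.1 w hw t htw
        have hs1 : s = q.getVert 1 :=
          adj_start_eq_getVert_one hforest hq (hnbr s hsc.symm hsS) hsc.symm
        have ht1 : t = q.getVert 1 :=
          adj_start_eq_getVert_one hforest hq (hnbr t hct htS) hct
        exact hst (hs1.trans ht1.symm)
      have ha : a ∈ extremeSet Cvx S := hend a b p hp hpS hxp hlen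
      have hb : b ∈ extremeSet Cvx S := by
        apply hend b a p.reverse hp.reverse
        · intro y hy
          apply hpS
          rwa [Walk.support_reverse, List.mem_reverse] at hy
        · rwa [Walk.support_reverse, List.mem_reverse]
        · rwa [Walk.length_reverse]
      exact pconvex_chull (extremeSet Cvx S) (subset_chull Cvx _ ha)
        (subset_chull Cvx _ hb) p (trianglePath_of_path hforest hp) x hxp
    · exact chull_min hextsub hS
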